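/- Let σ > 0, Ω ∈ ℝ, and let χ(τ) = π^(−1/4) σ^(−1/2) e^(−τ²/(2σ²)). Then lim_{ε→0⁺} [ −(1/(2π²)) ∫∫ χ(τ)χ(τ') e^(−iΩ(τ−τ')) (τ − τ' − iε)^(−2) dτ dτ' ] = (1/(2πσ)) ( e^(−σ²Ω²)/π^(1/2) − σΩ erfc(σΩ) ). -/

import Mathlib

open MeasureTheory Filter
open scoped Topology

/-- The complementary error function `erfc(x) = (2/√π) ∫_x^∞ e^{−t²} dt`. -/
noncomputable def erfc (x : ℝ) : ℝ :=
  (2 / Real.sqrt Real.pi) * ∫ t in Set.Ioi x, Real.exp (-t ^ 2)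

namespace InertialAux

open Complex Set Real

lemma tendsto_id_mul_exp_neg {b : ℝ} (hb : 0 < b) :
    Tendsto (fun x : ℝ => x * Real.exp (-b * x)) atTop (𝓝 0) := by
  have h := (Real.tendsto_pow_mul_exp_neg_atTop_nhds_zero 1).comp
    (tendsto_id.const_mul_atTop hb)
  have h2 : Tendsto (fun x : ℝ => b⁻¹ * ((b * x) ^ 1 * Real.exp (-(b * x)))) atTop
      (𝓝 (b⁻¹ * 0)) := h.const_mul _
  rw [mul_zero] at h2
  refine h2.congr (fun x => ?_)
  field_simp

lemma integrableOn_id_mul_exp_neg {b : ℝ} (hb : 0 < b) :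
    IntegrableOn (fun x : ℝ => x * Real.exp (-b * x)) (Ioi 0) := by
  refine integrable_of_isBigO_exp_neg (half_pos hb) ?_ ?_
  · exact (continuous_id.mul (Real.continuous_exp.comp (continuous_const.mul continuous_id))).continuousOn
  · have h1 : Tendsto (fun x : ℝ => x * Real.exp (-(b/2) * x)) atTop (𝓝 0) :=
      tendsto_id_mul_exp_neg (half_pos hb)
    have h2 : (fun x : ℝ => x * Real.exp (-(b/2) * x)) =O[atTop] (fun _ : ℝ => (1:ℝ)) :=
      h1.isBigO_one ℝ
    have h3 := h2.mul (Asymptotics.isBigO_refl (fun x : ℝ => Real.exp (-(b/2) * x)) atTop)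
    refine h3.congr' ?_ ?_
    · filter_upwards with x
      rw [mul_assoc, ← Real.exp_add]
      ring_nf
    · filter_upwards with x
      rw [one_mul]

lemma integrableOn_omega_cexp {a : ℂ} (ha : 0 < a.re) :
    IntegrableOn (fun ω : ℝ => (ω : ℂ) * Complex.exp (-a * ω)) (Ioi 0) := by
  refine Integrable.mono' ((integrableOn_id_mul_exp_neg ha).mono_measure le_rfl) ?_ ?_
  · exact (Complex.continuous_ofReal.mul (Complex.continuous_exp.comp
      (continuous_const.mul Complex.continuous_ofReal))).aestronglyMeasurable
  · filter_upwards [ae_restrict_mem measurableSet_Ioi] with ω hω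
    rw [norm_mul, Complex.norm_exp]
    simp only [Complex.norm_real, Real.norm_eq_abs, abs_of_pos (show 0 < ω from hω)]
    have : (-a * ↑ω).re = -a.re * ω := by simp [Complex.mul_re]
    rw [this]

lemma translate_Ioi (g : ℝ → ℝ) (a c : ℝ) :
    ∫ x in Ioi a, g (x + c) = ∫ x in Ioi (a + c), g x := by
  have hemb := measurableEmbedding_addRight c
  have : ∫ x in Ioi (a + c), g x
      = ∫ x in Ioi (a + c), g x ∂(Measure.map (· + c) volume) := by
    rw [map_add_right_eq_self volume c]
  rw [this, hemb.setIntegral_map]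
  congr 1
  ext x
  simp [mem_preimage, mem_Ioi]

lemma kernel_rep {ε : ℝ} (hε : 0 < ε) (u : ℝ) :
    (((u : ℂ) - Complex.I * ε) ^ 2)⁻¹
      = -∫ ω in Ioi (0 : ℝ), (ω : ℂ) * Complex.exp (-((ε : ℂ) + Complex.I * u) * ω) := by
  set a : ℂ := (ε : ℂ) + Complex.I * u with ha
  have hare : a.re = ε := by simp [ha]
  have hapos : 0 < a.re := by rw [hare]; exact hε
  have hane : a ≠ 0 := fun h => by simp [h] at hapos
  -- the ℂ → ℂ antiderivative
  have hder : ∀ ω : ℝ, HasDerivAt (fun z : ℂ => -(z / a + 1 / a ^ 2) * Complex.exp (-a * z))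
      ((ω : ℂ) * Complex.exp (-a * ω)) (ω : ℂ) := by
    intro ω
    have h1 : HasDerivAt (fun z : ℂ => -(z / a + 1 / a ^ 2)) (-(1 / a)) (ω : ℂ) := by
      have := (((hasDerivAt_id (ω : ℂ)).div_const a).add_const (1 / a ^ 2)).neg
      exact this
    have h2 : HasDerivAt (fun z : ℂ => Complex.exp (-a * z)) (-a * Complex.exp (-a * ω)) (ω : ℂ) := by
      simpa [mul_comm] using ((hasDerivAt_id ((ω:ℂ))).const_mul (-a)).cexp
    have := h1.mul h2
    refine HasDerivAt.congr_deriv this ?_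
    field_simp
    ring
  have hderR : ∀ ω ∈ Ici (0:ℝ), HasDerivAt
      (fun ω : ℝ => -((ω : ℂ) / a + 1 / a ^ 2) * Complex.exp (-a * ω))
      ((ω : ℂ) * Complex.exp (-a * ω)) ω := fun ω _ => (hder ω).comp_ofReal
  have hint : IntegrableOn (fun ω : ℝ => (ω : ℂ) * Complex.exp (-a * ω)) (Ioi 0) :=
    integrableOn_omega_cexp hapos
  have htend : Tendsto (fun ω : ℝ => -((ω : ℂ) / a + 1 / a ^ 2) * Complex.exp (-a * ω))
      atTop (𝓝 0) := by
    rw [tendsto_zero_iff_norm_tendsto_zero]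
    have hb : Tendsto (fun ω : ℝ => ‖a‖⁻¹ * (ω * Real.exp (-ε * ω))
        + ‖1 / a ^ 2‖ * Real.exp (-ε * ω)) atTop (𝓝 (‖a‖⁻¹ * 0 + ‖1 / a ^ 2‖ * 0)) := by
      refine Tendsto.add (Tendsto.const_mul _ (tendsto_id_mul_exp_neg hε))
        (Tendsto.const_mul _ ?_)
      have : Tendsto (fun ω : ℝ => -ε * ω) atTop atBot := by
        exact tendsto_id.const_mul_atTop_of_neg (by linarith)
      exact Real.tendsto_exp_atBot.comp this
    simp only [mul_zero, add_zero] at hb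
    refine squeeze_zero_norm' ?_ hb
    filter_upwards [eventually_ge_atTop (0:ℝ)] with ω hω
    have hexp : ‖Complex.exp (-a * ω)‖ = Real.exp (-ε * ω) := by
      rw [Complex.norm_exp]
      congr 1
      simp [Complex.mul_re, hare]
    rw [norm_norm, norm_mul, hexp]
    have : ‖-((ω : ℂ) / a + 1 / a ^ 2)‖ ≤ ‖a‖⁻¹ * ω + ‖1 / a ^ 2‖ := by
      rw [norm_neg]
      refine (norm_add_le _ _).trans ?_
      gcongr
      rw [norm_div, Complex.norm_real, Real.norm_eq_abs, _root_.abs_of_nonneg hω,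
        div_eq_mul_inv, mul_comm]
    nlinarith [Real.exp_pos (-ε * ω), norm_nonneg (-((ω : ℂ) / a + 1 / a ^ 2))]
  have key := integral_Ioi_of_hasDerivAt_of_tendsto' hderR hint htend
  rw [key]
  have h0 : -(((0:ℝ) : ℂ) / a + 1 / a ^ 2) * Complex.exp (-a * (0:ℝ)) = -(1 / a ^ 2) := by
    simp
  rw [h0]
  have hsq : ((u : ℂ) - Complex.I * ε) ^ 2 = -(a ^ 2) := by
    rw [ha]
    linear_combination (u^2 + (ε:ℂ)^2) * Complex.I_sq
  rw [hsq]
  field_simp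
  ring

lemma gauss_exp_form {σ : ℝ} (hσ : 0 < σ) (c : ℂ) (τ : ℝ) :
    (Real.exp (-τ ^ 2 / (2 * σ ^ 2)) : ℂ) * Complex.exp (c * τ)
      = Complex.exp (((-(1 / (2 * σ ^ 2)) : ℝ) : ℂ) * (τ:ℂ) ^ 2 + c * τ + 0) := by
  rw [Complex.ofReal_exp, ← Complex.exp_add]
  congr 1
  push_cast
  have : (σ:ℂ) ≠ 0 := Complex.ofReal_ne_zero.mpr hσ.ne'
  field_simp
  ring

lemma gauss_ft {σ : ℝ} (hσ : 0 < σ) (c : ℂ) :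
    ∫ τ : ℝ, (Real.exp (-τ ^ 2 / (2 * σ ^ 2)) : ℂ) * Complex.exp (c * τ)
      = (Real.sqrt (2 * Real.pi * σ ^ 2) : ℂ) * Complex.exp (c ^ 2 * σ ^ 2 / 2) := by
  have hb : ((-(1 / (2 * σ ^ 2)) : ℝ) : ℂ).re < 0 := by
    simp only [Complex.ofReal_re]
    exact neg_lt_zero.mpr (by positivity)
  have key := integral_cexp_quadratic hb c 0
  calc ∫ τ : ℝ, (Real.exp (-τ ^ 2 / (2 * σ ^ 2)) : ℂ) * Complex.exp (c * τ)
      = ∫ τ : ℝ, Complex.exp (((-(1 / (2 * σ ^ 2)) : ℝ) : ℂ) * (τ:ℂ) ^ 2 + c * τ + 0) := by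
        exact integral_congr_ae (Eventually.of_forall fun τ => gauss_exp_form hσ c τ)
    _ = (Real.sqrt (2 * Real.pi * σ ^ 2) : ℂ) * Complex.exp (c ^ 2 * σ ^ 2 / 2) := by
        rw [key]
        congr 1
        · have hbne : -((-(1 / (2 * σ ^ 2)) : ℝ) : ℂ) = ((1 / (2 * σ ^ 2) : ℝ) : ℂ) := by
            push_cast; ring
          rw [hbne]
          have h1 : ((Real.pi : ℂ)) / ((1 / (2 * σ ^ 2) : ℝ) : ℂ)
              = ((2 * Real.pi * σ ^ 2 : ℝ) : ℂ) := by
            push_cast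
            have : (σ:ℂ) ≠ 0 := Complex.ofReal_ne_zero.mpr hσ.ne'
            field_simp
          rw [h1]
          have h2 : ((1:ℂ)/2) = (((1:ℝ)/2 : ℝ) : ℂ) := by norm_num
          rw [h2, ← Complex.ofReal_cpow (by positivity) ((1:ℝ)/2)]
          rw [Real.sqrt_eq_rpow]
        · congr 1
          have : (σ:ℂ) ≠ 0 := Complex.ofReal_ne_zero.mpr hσ.ne'
          push_cast
          field_simp
          ring

lemma integrable_gauss_cexp {σ : ℝ} (hσ : 0 < σ) (c : ℂ) :
    Integrable (fun τ : ℝ => (Real.exp (-τ ^ 2 / (2 * σ ^ 2)) : ℂ) * Complex.exp (c * τ)) := by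
  have hb : ((-(1 / (2 * σ ^ 2)) : ℝ) : ℂ).re < 0 := by
    simp only [Complex.ofReal_re]; exact neg_lt_zero.mpr (by positivity)
  have := integrable_cexp_quadratic' hb c 0
  refine this.congr ?_
  exact Eventually.of_forall fun τ => (gauss_exp_form hσ c τ).symm

lemma swap_helper {F : ℝ → ℝ → ℂ} (hF : Continuous (fun p : ℝ × ℝ => F p.1 p.2))
    {g h : ℝ → ℝ} (hg : Integrable g) (hh : IntegrableOn h (Ioi 0))
    (hbound : ∀ x y, y ∈ Ioi (0:ℝ) → ‖F x y‖ ≤ g x * h y) :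
    ∫ x : ℝ, ∫ y in Ioi (0:ℝ), F x y = ∫ y in Ioi (0:ℝ), ∫ x : ℝ, F x y := by
  refine integral_integral_swap ?_
  refine Integrable.mono' (hg.mul_prod hh) ?_ ?_
  · exact hF.aestronglyMeasurable
  · have hprod := Measure.prod_restrict (μ := (volume : Measure ℝ))
      (ν := (volume : Measure ℝ)) (univ : Set ℝ) (Ioi (0:ℝ))
    rw [Measure.restrict_univ] at hprod
    rw [hprod]
    filter_upwards [ae_restrict_mem (MeasurableSet.univ.prod measurableSet_Ioi)] with z hz
    exact hbound z.1 z.2 hz.2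

variable {σ Ω : ℝ}

lemma integrableOn_shift_gauss (hσ : 0 < σ) :
    IntegrableOn (fun ω : ℝ => (Ω + ω) * Real.exp (-σ ^ 2 * (Ω + ω) ^ 2)) (Ioi 0) := by
  have h := (integrable_mul_exp_neg_mul_sq (b := σ ^ 2) (by positivity)).comp_add_left Ω
  exact h.integrableOn

lemma integrableOn_gauss_shift (hσ : 0 < σ) :
    IntegrableOn (fun ω : ℝ => Real.exp (-σ ^ 2 * (Ω + ω) ^ 2)) (Ioi 0) := by
  have h := (integrable_exp_neg_mul_sq (b := σ ^ 2) (by positivity)).comp_add_left Ω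
  exact h.integrableOn

lemma integrableOn_lin_gauss (hσ : 0 < σ) :
    IntegrableOn (fun ω : ℝ => ω * Real.exp (-σ ^ 2 * (Ω + ω) ^ 2)) (Ioi 0) := by
  have h := (integrableOn_shift_gauss (Ω := Ω) hσ).sub
    ((integrableOn_gauss_shift (Ω := Ω) hσ).const_mul Ω)
  refine IntegrableOn.congr_fun h (fun ω _ => ?_) measurableSet_Ioi
  simp only [Pi.sub_apply]
  ring

lemma tendsto_reg (hσ : 0 < σ) :
    Filter.Tendsto (fun ε : ℝ =>
        ∫ ω in Ioi (0:ℝ), ω * Real.exp (-ε * ω) * Real.exp (-σ ^ 2 * (Ω + ω) ^ 2))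
      (𝓝[>] 0)
      (𝓝 (∫ ω in Ioi (0:ℝ), ω * Real.exp (-σ ^ 2 * (Ω + ω) ^ 2))) := by
  refine tendsto_integral_filter_of_dominated_convergence
    (fun ω => ω * Real.exp (-σ ^ 2 * (Ω + ω) ^ 2)) ?_ ?_ ?_ ?_
  · filter_upwards with ε
    exact (Continuous.aestronglyMeasurable (by continuity))
  · filter_upwards [self_mem_nhdsWithin] with ε (hε : 0 < ε)
    filter_upwards [ae_restrict_mem measurableSet_Ioi] with ω (hω : 0 < ω)
    rw [Real.norm_eq_abs, _root_.abs_of_nonneg (by positivity)]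
    have h1 : Real.exp (-ε * ω) ≤ 1 := by
      rw [Real.exp_le_one_iff]
      nlinarith
    calc ω * Real.exp (-ε * ω) * Real.exp (-σ ^ 2 * (Ω + ω) ^ 2)
        ≤ ω * Real.exp (-σ ^ 2 * (Ω + ω) ^ 2) := by
          refine mul_le_mul_of_nonneg_right ?_ (Real.exp_pos _).le
          exact mul_le_of_le_one_right hω.le h1
      _ = ω * Real.exp (-σ ^ 2 * (Ω + ω) ^ 2) := rfl
  · exact integrableOn_lin_gauss hσ
  · filter_upwards with ω
    have : Tendsto (fun ε : ℝ => ω * Real.exp (-ε * ω) * Real.exp (-σ ^ 2 * (Ω + ω) ^ 2))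
        (𝓝 0) (𝓝 (ω * Real.exp (-0 * ω) * Real.exp (-σ ^ 2 * (Ω + ω) ^ 2))) := by
      refine Tendsto.mul (Tendsto.mul tendsto_const_nhds ?_) tendsto_const_nhds
      exact (Real.continuous_exp.tendsto _).comp ((continuous_id.neg.mul continuous_const).tendsto 0)
    rw [show (-0 : ℝ) * ω = 0 by ring, Real.exp_zero, mul_one] at this
    exact this.mono_left nhdsWithin_le_nhds

lemma J_val (hσ : 0 < σ) :
    ∫ ω in Ioi (0:ℝ), ω * Real.exp (-σ ^ 2 * (Ω + ω) ^ 2)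
      = Real.exp (-σ ^ 2 * Ω ^ 2) / (2 * σ ^ 2)
        - Ω * (Real.sqrt Real.pi / (2 * σ)) * erfc (σ * Ω) := by
  have hsplit : ∫ ω in Ioi (0:ℝ), ω * Real.exp (-σ ^ 2 * (Ω + ω) ^ 2)
      = (∫ ω in Ioi (0:ℝ), (Ω + ω) * Real.exp (-σ ^ 2 * (Ω + ω) ^ 2))
        - Ω * ∫ ω in Ioi (0:ℝ), Real.exp (-σ ^ 2 * (Ω + ω) ^ 2) := by
    rw [← integral_const_mul, ← integral_sub (integrableOn_shift_gauss hσ)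
      ((integrableOn_gauss_shift hσ).const_mul Ω)]
    congr 1
    ext ω
    ring
  rw [hsplit]
  have hpart1 : ∫ ω in Ioi (0:ℝ), (Ω + ω) * Real.exp (-σ ^ 2 * (Ω + ω) ^ 2)
      = Real.exp (-σ ^ 2 * Ω ^ 2) / (2 * σ ^ 2) := by
    have hderiv : ∀ ω ∈ Ici (0:ℝ), HasDerivAt
        (fun ω : ℝ => -(1 / (2 * σ ^ 2)) * Real.exp (-σ ^ 2 * (Ω + ω) ^ 2))
        ((Ω + ω) * Real.exp (-σ ^ 2 * (Ω + ω) ^ 2)) ω := by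
      intro ω _
      have h1 : HasDerivAt (fun ω : ℝ => -σ ^ 2 * (Ω + ω) ^ 2)
          (-σ ^ 2 * (2 * (Ω + ω))) ω := by
        have := ((hasDerivAt_id ω).const_add Ω).pow 2
        simpa using this.const_mul (-σ ^ 2)
      have := (h1.exp).const_mul (-(1 / (2 * σ ^ 2)))
      refine HasDerivAt.congr_deriv this ?_
      have hσ0 : σ ≠ 0 := hσ.ne'
      field_simp
    have htend : Tendsto (fun ω : ℝ => -(1 / (2 * σ ^ 2)) * Real.exp (-σ ^ 2 * (Ω + ω) ^ 2))
        atTop (𝓝 0) := by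
      rw [show (0:ℝ) = -(1 / (2 * σ ^ 2)) * 0 by ring]
      refine Tendsto.const_mul _ ?_
      refine Real.tendsto_exp_atBot.comp ?_
      have h2 : Tendsto (fun ω : ℝ => (Ω + ω) ^ 2) atTop atTop :=
        (tendsto_pow_atTop (two_ne_zero)).comp (tendsto_atTop_add_const_left _ _ tendsto_id)
      exact Tendsto.const_mul_atTop_of_neg (neg_lt_zero.mpr (by positivity)) h2
    have key := integral_Ioi_of_hasDerivAt_of_tendsto' hderiv
      (integrableOn_shift_gauss hσ) htend
    rw [key]
    field_simp
    simp
  have hpart2 : ∫ ω in Ioi (0:ℝ), Real.exp (-σ ^ 2 * (Ω + ω) ^ 2)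
      = (Real.sqrt Real.pi / (2 * σ)) * erfc (σ * Ω) := by
    have h1 : ∫ ω in Ioi (0:ℝ), Real.exp (-σ ^ 2 * (Ω + ω) ^ 2)
        = ∫ x in Ioi Ω, Real.exp (-σ ^ 2 * x ^ 2) := by
      have := translate_Ioi (fun x => Real.exp (-σ ^ 2 * x ^ 2)) 0 Ω
      rw [zero_add] at this
      rw [← this]
      congr 1
      ext ω
      rw [add_comm]
    have h2 : ∫ x in Ioi Ω, Real.exp (-σ ^ 2 * x ^ 2)
        = σ⁻¹ * ∫ t in Ioi (σ * Ω), Real.exp (-t ^ 2) := by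
      have := integral_comp_mul_left_Ioi (fun t => Real.exp (-t ^ 2)) Ω hσ
      simp only [smul_eq_mul] at this
      rw [← this]
      congr 1
      ext x
      congr 1
      ring
    have h3 : ∫ t in Ioi (σ * Ω), Real.exp (-t ^ 2)
        = (Real.sqrt Real.pi / 2) * erfc (σ * Ω) := by
      rw [erfc]
      have hs : Real.sqrt Real.pi ≠ 0 := by
        positivity
      field_simp
    rw [h1, h2, h3]
    ring
  rw [hpart1, hpart2]
  ring

lemma integral_ofReal'' (μ : Measure ℝ) (f : ℝ → ℝ) :
    ∫ x, ((f x : ℝ) : ℂ) ∂μ = ((∫ x, f x ∂μ : ℝ) : ℂ) :=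
  integral_ofReal

variable {σ Ω : ℝ}

set_option maxHeartbeats 1000000 in
lemma response_eq (hσ : 0 < σ) {ε : ℝ} (hε : 0 < ε) (χ : ℝ → ℝ)
    (hχ : ∀ τ, χ τ = Real.pi ^ (-(1 : ℝ) / 4) * σ ^ (-(1 : ℝ) / 2) *
      Real.exp (-τ ^ 2 / (2 * σ ^ 2))) :
    -(1 / (2 * (Real.pi : ℂ) ^ 2)) *
          ∫ τ : ℝ, ∫ τ' : ℝ,
            ((χ τ * χ τ' : ℝ) : ℂ) * Complex.exp (-Complex.I * Ω * ((τ : ℂ) - τ')) *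
              (((τ : ℂ) - τ' - Complex.I * ε) ^ 2)⁻¹
      = ((Real.sqrt Real.pi * σ / Real.pi ^ 2) *
          ∫ ω in Ioi (0:ℝ), ω * Real.exp (-ε * ω) * Real.exp (-σ ^ 2 * (Ω + ω) ^ 2) : ℝ) := by
  have hπ : (0:ℝ) < Real.pi := Real.pi_pos
  set c0 : ℝ := Real.pi ^ (-(1 : ℝ) / 4) * σ ^ (-(1 : ℝ) / 2) with hc0
  have hc0pos : 0 < c0 := by
    rw [hc0]
    positivity
  set φ : ℝ → ℝ := fun τ => c0 * Real.exp (-τ ^ 2 / (2 * σ ^ 2)) with hφ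
  have hχφ : χ = φ := funext fun τ => by rw [hχ, hφ]
  have hφpos : ∀ τ, 0 < φ τ := fun τ => by simp only [hφ]; positivity
  have hφcont : Continuous φ := by
    simp only [hφ]
    exact continuous_const.mul (Real.continuous_exp.comp (by fun_prop))
  have hφint : Integrable φ := by
    simp only [hφ]
    refine ((integrable_exp_neg_mul_sq (b := 1/(2*σ^2)) (by positivity)).const_mul c0).congr ?_
    filter_upwards with τ
    congr 1
    field_simp
  -- the Fourier transform of φ
  set M : ℝ := c0 * Real.sqrt (2 * Real.pi * σ ^ 2) with hM
  have hMpos : 0 < M := by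
    rw [hM]
    have : 0 < Real.sqrt (2 * Real.pi * σ ^ 2) := Real.sqrt_pos.mpr (by positivity)
    positivity
  set ψ : ℝ → ℝ := fun ω => M * Real.exp (-σ ^ 2 * (Ω + ω) ^ 2 / 2) with hψ
  have hψpos : ∀ ω, 0 < ψ ω := fun ω => by simp only [hψ]; positivity
  have hψle : ∀ ω, ψ ω ≤ M := by
    intro ω
    simp only [hψ]
    have h1 : Real.exp (-σ ^ 2 * (Ω + ω) ^ 2 / 2) ≤ 1 := by
      rw [Real.exp_le_one_iff]
      nlinarith [sq_nonneg (Ω + ω), sq_nonneg σ]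
    exact mul_le_of_le_one_right hMpos.le h1
  have hft : ∀ c : ℂ, ∫ τ : ℝ, (φ τ : ℂ) * Complex.exp (c * τ)
      = (M : ℂ) * Complex.exp (c ^ 2 * σ ^ 2 / 2) := by
    intro c
    calc ∫ τ : ℝ, (φ τ : ℂ) * Complex.exp (c * τ)
        = (c0 : ℂ) * ∫ τ : ℝ, (Real.exp (-τ ^ 2 / (2 * σ ^ 2)) : ℂ) * Complex.exp (c * τ) := by
          rw [← integral_const_mul]
          congr 1
          ext τ
          simp only [hφ]
          push_cast
          ring
      _ = (M : ℂ) * Complex.exp (c ^ 2 * σ ^ 2 / 2) := by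
          rw [gauss_ft hσ c, hM]
          push_cast
          ring
  have hexparg : ∀ ω : ℝ, ((Complex.I * ((Ω:ℂ) + ω)) ^ 2 * (σ:ℂ) ^ 2 / 2)
      = ((-σ ^ 2 * (Ω + ω) ^ 2 / 2 : ℝ) : ℂ) := by
    intro ω
    push_cast
    linear_combination ((σ:ℂ)^2 * ((Ω:ℂ)+ω)^2/2) * Complex.I_sq
  have hexparg' : ∀ ω : ℝ, ((-(Complex.I * ((Ω:ℂ) + ω))) ^ 2 * (σ:ℂ) ^ 2 / 2)
      = ((-σ ^ 2 * (Ω + ω) ^ 2 / 2 : ℝ) : ℂ) := by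
    intro ω
    rw [neg_pow, ← hexparg ω]
    ring
  have hB : ∀ ω : ℝ, (∫ τ' : ℝ, (φ τ' : ℂ) * Complex.exp (Complex.I * ((Ω:ℂ) + ω) * τ'))
      = (ψ ω : ℂ) := by
    intro ω
    rw [hft, hexparg]
    simp only [hψ]
    push_cast
    ring
  have hA : ∀ ω : ℝ, (∫ τ : ℝ, (φ τ : ℂ) * Complex.exp (-(Complex.I * ((Ω:ℂ) + ω)) * τ))
      = (ψ ω : ℂ) := by
    intro ω
    rw [hft, hexparg']
    simp only [hψ]
    push_cast
    ring
  -- the two factors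
  set A : ℝ → ℝ → ℂ := fun τ ω =>
    (φ τ : ℂ) * Complex.exp (-(Complex.I * ((Ω:ℂ) + ω)) * τ)
      * ((ω : ℂ) * Complex.exp (-(ε:ℂ) * ω)) with hAdef
  set B : ℝ → ℝ → ℂ := fun τ' ω =>
    (φ τ' : ℂ) * Complex.exp (Complex.I * ((Ω:ℂ) + ω) * τ') with hBdef
  have hnormA : ∀ τ ω : ℝ, 0 < ω → ‖A τ ω‖ = φ τ * (ω * Real.exp (-ε * ω)) := by
    intro τ ω hω
    simp only [hAdef]
    simp only [norm_mul, Complex.norm_real, Real.norm_eq_abs, 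
      Complex.norm_exp]
    rw [_root_.abs_of_pos (hφpos τ), _root_.abs_of_pos hω]
    have h1 : (-(Complex.I * ((Ω:ℂ) + ω)) * τ).re = 0 := by
      simp [Complex.mul_re, Complex.mul_im]
    have h2 : (-(ε:ℂ) * ω).re = -ε * ω := by
      simp [Complex.mul_re]
    rw [h1, h2, Real.exp_zero]
    ring
  have hnormB : ∀ τ' ω : ℝ, ‖B τ' ω‖ = φ τ' := by
    intro τ' ω
    simp only [hBdef]
    simp only [norm_mul, Complex.norm_real, Real.norm_eq_abs, 
      Complex.norm_exp]
    rw [_root_.abs_of_pos (hφpos τ')]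
    have h1 : (Complex.I * ((Ω:ℂ) + ω) * τ').re = 0 := by
      simp [Complex.mul_re, Complex.mul_im]
    rw [h1, Real.exp_zero]
    ring
  have hF1 : ∀ τ : ℝ, Continuous (fun p : ℝ × ℝ => A τ p.2 * B p.1 p.2) := by
    intro τ
    simp only [hAdef, hBdef, hφ]
    fun_prop
  have hF2 : Continuous (fun p : ℝ × ℝ => A p.1 p.2 * (ψ p.2 : ℂ)) := by
    simp only [hAdef, hψ, hφ]
    fun_prop
  -- step 1: inner integral
  have step1 : ∀ τ : ℝ,
      (∫ τ' : ℝ, ((φ τ * φ τ' : ℝ) : ℂ) * Complex.exp (-Complex.I * Ω * ((τ : ℂ) - τ')) *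
        (((τ : ℂ) - τ' - Complex.I * ε) ^ 2)⁻¹)
      = -∫ ω in Ioi (0:ℝ), A τ ω * (ψ ω : ℂ) := by
    intro τ
    have e1 : ∀ τ' : ℝ,
        ((φ τ * φ τ' : ℝ) : ℂ) * Complex.exp (-Complex.I * Ω * ((τ : ℂ) - τ')) *
          (((τ : ℂ) - τ' - Complex.I * ε) ^ 2)⁻¹
        = -∫ ω in Ioi (0:ℝ), A τ ω * B τ' ω := by
      intro τ'
      have hk := kernel_rep hε (τ - τ')
      push_cast at hk
      rw [hk, mul_neg, ← integral_const_mul]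
      rw [neg_inj]
      congr 1
      ext ω
      have harg : (-Complex.I * (Ω:ℂ) * ((τ:ℂ) - τ')) + (-((ε:ℂ) + Complex.I * ((τ:ℂ) - τ')) * ω)
          = (-(Complex.I * ((Ω:ℂ) + ω)) * τ) + (-(ε:ℂ) * ω) + (Complex.I * ((Ω:ℂ) + ω) * τ') := by
        ring
      calc ((φ τ * φ τ' : ℝ) : ℂ) * Complex.exp (-Complex.I * Ω * ((τ : ℂ) - τ')) *
            ((ω:ℂ) * Complex.exp (-((ε:ℂ) + Complex.I * ((τ:ℂ) - τ')) * ω))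
          = ((φ τ : ℝ) : ℂ) * ((φ τ' : ℝ) : ℂ) * (ω:ℂ) *
            Complex.exp ((-Complex.I * (Ω:ℂ) * ((τ:ℂ) - τ')) +
              (-((ε:ℂ) + Complex.I * ((τ:ℂ) - τ')) * ω)) := by
            rw [Complex.exp_add]
            push_cast
            ring
        _ = A τ ω * B τ' ω := by
            simp only [hAdef, hBdef]
            rw [harg, Complex.exp_add, Complex.exp_add]
            ring
    rw [integral_congr_ae (Eventually.of_forall e1), integral_neg]
    rw [neg_inj]
    have hswap := swap_helper (F := fun τ' ω => A τ ω * B τ' ω)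
      (g := φ) (h := fun ω => φ τ * (ω * Real.exp (-ε * ω)))
      (hF1 τ) hφint ((integrableOn_id_mul_exp_neg hε).const_mul (φ τ))
      (fun τ' ω hω => by rw [norm_mul, hnormA τ ω hω, hnormB τ' ω]; rw [mul_comm])
    rw [hswap]
    congr 1
    ext ω
    rw [integral_const_mul, hB ω]
  -- step 2 and 3: outer swap
  rw [hχφ]
  rw [integral_congr_ae (Eventually.of_forall step1), integral_neg, mul_neg, neg_mul, neg_neg]
  have hbound2 : ∀ τ ω : ℝ, ω ∈ Ioi (0:ℝ) →
      ‖A τ ω * (ψ ω : ℂ)‖ ≤ φ τ * (M * (ω * Real.exp (-ε * ω))) := by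
    intro τ ω hω
    rw [norm_mul, hnormA τ ω hω, Complex.norm_real, Real.norm_eq_abs,
      _root_.abs_of_pos (hψpos ω)]
    calc φ τ * (ω * Real.exp (-ε * ω)) * ψ ω
        ≤ φ τ * (ω * Real.exp (-ε * ω)) * M := by
          refine mul_le_mul_of_nonneg_left (hψle ω) ?_
          have h1 := (hφpos τ).le
          have h2 : 0 ≤ ω := le_of_lt hω
          positivity
      _ = φ τ * (M * (ω * Real.exp (-ε * ω))) := by ring
  have hswap2 := swap_helper (F := fun τ ω => A τ ω * (ψ ω : ℂ))
    (g := φ) (h := fun ω => M * (ω * Real.exp (-ε * ω)))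
    hF2 hφint ((integrableOn_id_mul_exp_neg hε).const_mul M) hbound2
  · rw [hswap2]
    -- evaluate inner τ-integral
    have e2 : ∀ ω ∈ Ioi (0:ℝ),
        (∫ τ : ℝ, A τ ω * (ψ ω : ℂ))
        = ((ψ ω ^ 2 * (ω * Real.exp (-ε * ω)) : ℝ) : ℂ) := by
      intro ω _
      have : (∫ τ : ℝ, A τ ω * (ψ ω : ℂ))
          = (∫ τ : ℝ, (φ τ : ℂ) * Complex.exp (-(Complex.I * ((Ω:ℂ) + ω)) * τ))
            * (((ω : ℂ) * Complex.exp (-(ε:ℂ) * ω)) * (ψ ω : ℂ)) := by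
        rw [← integral_mul_const]
        congr 1
        ext τ
        simp only [hAdef]
        ring
      rw [this, hA ω]
      rw [show Complex.exp (-(ε:ℂ) * ω) = ((Real.exp (-ε * ω) : ℝ) : ℂ) by
        rw [Complex.ofReal_exp]; push_cast; ring_nf]
      push_cast
      ring
    rw [setIntegral_congr_fun measurableSet_Ioi e2]
    rw [integral_ofReal'' _ (fun ω => ψ ω ^ 2 * (ω * Real.exp (-ε * ω)))]
    -- now a real identity
    have hψsq : ∀ ω : ℝ, ψ ω ^ 2 = 2 * Real.sqrt Real.pi * σ * Real.exp (-σ ^ 2 * (Ω + ω) ^ 2) := by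
      intro ω
      simp only [hψ, hM, hc0]
      have h1 : (Real.pi ^ (-(1:ℝ)/4)) ^ 2 = Real.pi ^ (-(1:ℝ)/2) := by
        rw [← Real.rpow_natCast (Real.pi ^ (-(1:ℝ)/4)) 2, ← Real.rpow_mul hπ.le]
        norm_num
      have h2 : (σ ^ (-(1:ℝ)/2)) ^ 2 = σ⁻¹ := by
        rw [← Real.rpow_natCast (σ ^ (-(1:ℝ)/2)) 2, ← Real.rpow_mul hσ.le]
        norm_num
        exact Real.rpow_neg_one σ
      have h3 : Real.sqrt (2 * Real.pi * σ ^ 2) ^ 2 = 2 * Real.pi * σ ^ 2 :=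
        Real.sq_sqrt (by positivity)
      have h4 : Real.exp (-σ ^ 2 * (Ω + ω) ^ 2 / 2) ^ 2 = Real.exp (-σ ^ 2 * (Ω + ω) ^ 2) := by
        rw [sq, ← Real.exp_add]
        congr 1
        ring
      have h5 : Real.pi ^ (-(1:ℝ)/2) * Real.pi = Real.sqrt Real.pi := by
        rw [Real.sqrt_eq_rpow, show (1:ℝ)/2 = -(1:ℝ)/2 + 1 by norm_num,
          Real.rpow_add hπ, Real.rpow_one]
      calc (Real.pi ^ (-(1:ℝ)/4) * σ ^ (-(1:ℝ)/2) * Real.sqrt (2 * Real.pi * σ ^ 2)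
              * Real.exp (-σ ^ 2 * (Ω + ω) ^ 2 / 2)) ^ 2
          = ((Real.pi ^ (-(1:ℝ)/4)) ^ 2 * (σ ^ (-(1:ℝ)/2)) ^ 2)
            * Real.sqrt (2 * Real.pi * σ ^ 2) ^ 2
            * Real.exp (-σ ^ 2 * (Ω + ω) ^ 2 / 2) ^ 2 := by ring
        _ = 2 * Real.sqrt Real.pi * σ * Real.exp (-σ ^ 2 * (Ω + ω) ^ 2) := by
            rw [h1, h2, h3, h4, ← h5]
            field_simp
    have hreal : (1 / (2 * Real.pi ^ 2)) * ∫ ω in Ioi (0:ℝ), ψ ω ^ 2 * (ω * Real.exp (-ε * ω))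
        = (Real.sqrt Real.pi * σ / Real.pi ^ 2) *
          ∫ ω in Ioi (0:ℝ), ω * Real.exp (-ε * ω) * Real.exp (-σ ^ 2 * (Ω + ω) ^ 2) := by
      rw [← integral_const_mul, ← integral_const_mul]
      congr 1
      ext ω
      rw [hψsq ω]
      field_simp
    rw [← hreal]
    push_cast
    ring

end InertialAux

open InertialAux Set

/-- Response of a Gaussian-switched inertial detector coupled to the scalar density of the
massless Dirac field in two-dimensional Minkowski vacuum:
`lim_{ε→0⁺} [−(1/2π²) ∫∫ χ(τ)χ(τ') e^{−iΩ(τ−τ')} (τ−τ'−iε)^{−2} dτ dτ']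
  = (1/(2πσ))(e^{−σ²Ω²}/√π − σΩ erfc(σΩ))`. -/
theorem inertial_minkowski_response (σ Ω : ℝ) (hσ : 0 < σ)
    (χ : ℝ → ℝ)
    (hχ : ∀ τ, χ τ = Real.pi ^ (-(1 : ℝ) / 4) * σ ^ (-(1 : ℝ) / 2) *
      Real.exp (-τ ^ 2 / (2 * σ ^ 2))) :
    Tendsto (fun ε : ℝ =>
        -(1 / (2 * (Real.pi : ℂ) ^ 2)) *
          ∫ τ : ℝ, ∫ τ' : ℝ,
            ((χ τ * χ τ' : ℝ) : ℂ) * Complex.exp (-Complex.I * Ω * ((τ : ℂ) - τ')) *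
              (((τ : ℂ) - τ' - Complex.I * ε) ^ 2)⁻¹)
      (𝓝[>] 0)
      (𝓝 (((1 / (2 * Real.pi * σ) *
        (Real.exp (-σ ^ 2 * Ω ^ 2) / Real.sqrt Real.pi - σ * Ω * erfc (σ * Ω))) : ℝ) : ℂ)) := by
  have hπ : (0:ℝ) < Real.pi := Real.pi_pos
  have hπs : Real.sqrt Real.pi > 0 := Real.sqrt_pos.mpr hπ
  set C : ℝ := Real.sqrt Real.pi * σ / Real.pi ^ 2 with hC
  have hreal : Tendsto (fun ε : ℝ =>
      C * ∫ ω in Set.Ioi (0:ℝ), ω * Real.exp (-ε * ω) * Real.exp (-σ ^ 2 * (Ω + ω) ^ 2))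
      (𝓝[>] 0)
      (𝓝 (C * (Real.exp (-σ ^ 2 * Ω ^ 2) / (2 * σ ^ 2)
        - Ω * (Real.sqrt Real.pi / (2 * σ)) * erfc (σ * Ω)))) := by
    rw [← J_val hσ]
    exact (tendsto_reg hσ).const_mul C
  have hcast : C * (Real.exp (-σ ^ 2 * Ω ^ 2) / (2 * σ ^ 2)
        - Ω * (Real.sqrt Real.pi / (2 * σ)) * erfc (σ * Ω))
      = 1 / (2 * Real.pi * σ) *
        (Real.exp (-σ ^ 2 * Ω ^ 2) / Real.sqrt Real.pi - σ * Ω * erfc (σ * Ω)) := by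
    have h2 : Real.sqrt Real.pi * Real.sqrt Real.pi = Real.pi := Real.mul_self_sqrt hπ.le
    rw [hC]
    field_simp
    linear_combination (Real.exp (-(σ^2*Ω^2))
      - Real.sqrt Real.pi*σ*Ω*erfc (σ*Ω)) * h2
  rw [hcast] at hreal
  have := (Complex.continuous_ofReal.tendsto _).comp hreal
  refine this.congr' ?_
  filter_upwards [self_mem_nhdsWithin] with ε hε
  exact (response_eq hσ hε χ hχ).symm
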